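/- arXiv:2306.16163 — 2 statements merged into one kernel-verified Lean document; each statement's English description precedes it below -/
import Mathlib

section
/- Let p and h_t be probability distributions on a finite set 𝒳, q : 𝒳 → [0,1], η ∈ (0,1), s ∈ {-1,1}, and define the multiplicative-weights update h_{t+1}(x) = h_t(x)·exp(s·η·q(x)) / Σ_w h_t(w)·exp(s·η·q(w)). Then D(p‖h_{t+1}) - D(p‖h_t) ≤ -s·η·(q·p - q·h_t) + η²/2, where D denotes relative entropy and q·f = Σ_x q(x)·f(x). -/
/-!
Since `h' = h · exp(sηq) / Z`, the change of relative entropy is exactly `log Z - sη (q·p)`, so the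
claim is a bound on the log-moment generating function of `sηq` under `h`: the values of `sηq` lie
in an interval of length `η`, and `log E[e^f] ≤ E[f] + (b - a)² / 2` for `f` with values in `[a, b]`
(a weak Hoeffding lemma, from `e^y ≤ 1 + y + y²/2` for `y ≤ 0` and `log W ≤ W - 1`).
-/

open Real Finset

-- `exp (-a) ≥ 1 - a + a²/2` and `(1 + a + a²/2) (1 - a + a²/2) = 1 + a⁴/4 ≥ 1`.
theorem Real.exp_le_quadratic_of_nonpos {a : ℝ} (ha : a ≤ 0) : exp a ≤ 1 + a + a ^ 2 / 2 := by
  have hneg : 1 + -a + (-a) ^ 2 / 2 ≤ (exp a)⁻¹ := by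
    rw [← exp_neg]; exact quadratic_le_exp_of_nonneg (by linarith)
  rw [le_inv_comm₀ (by nlinarith) (exp_pos a)] at hneg
  refine hneg.trans ?_
  rw [inv_le_iff_one_le_mul₀ (by nlinarith)]
  nlinarith [sq_nonneg (a ^ 2)]

theorem Real.log_sum_mul_exp_le {ι : Type*} [Fintype ι] {w f : ι → ℝ} {a b : ℝ}
    (hw : ∀ x, 0 ≤ w x) (hwsum : ∑ x, w x = 1) (hf : ∀ x, f x ∈ Set.Icc a b) :
    log (∑ x, w x * exp (f x)) ≤ ∑ x, w x * f x + (b - a) ^ 2 / 2 := by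
  set W := ∑ x, w x * exp (f x - b)
  have hWpos : 0 < W := by
    have hle : ∑ x, w x * exp (a - b) ≤ W :=
      sum_le_sum fun x _ => mul_le_mul_of_nonneg_left (exp_le_exp.2 (by linarith [(hf x).1])) (hw x)
    rw [← sum_mul, hwsum, one_mul] at hle
    exact (exp_pos _).trans_le hle
  have hshift : ∑ x, w x * exp (f x) = exp b * W := by
    rw [mul_sum]
    refine sum_congr rfl fun x _ => ?_
    rw [exp_sub]
    field_simp
  have hWle : W ≤ ∑ x, w x * (1 + (f x - b) + (b - a) ^ 2 / 2) := by
    refine sum_le_sum fun x _ => mul_le_mul_of_nonneg_left ?_ (hw x)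
    obtain ⟨hax, hxb⟩ := hf x
    calc exp (f x - b) ≤ 1 + (f x - b) + (f x - b) ^ 2 / 2 := exp_le_quadratic_of_nonpos (by linarith)
      _ ≤ 1 + (f x - b) + (b - a) ^ 2 / 2 := by nlinarith
  have hmean : ∑ x, w x * (1 + (f x - b) + (b - a) ^ 2 / 2)
      = ∑ x, w x * f x + (1 - b + (b - a) ^ 2 / 2) := by
    simp only [mul_add, mul_sub, sum_add_distrib, sum_sub_distrib, ← sum_mul, hwsum]
    ring
  rw [hshift, log_mul (exp_pos b).ne' hWpos.ne', log_exp]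
  linarith [log_le_sub_one_of_pos hWpos]

theorem sum_mul_log_div_exp_update_sub {ι : Type*} [Fintype ι] (p h g : ι → ℝ)
    (hpsum : ∑ x, p x = 1) (hh : ∀ x, 0 < h x) :
    ∑ x, p x * log (p x / (h x * exp (g x) / ∑ w, h w * exp (g w)))
        - ∑ x, p x * log (p x / h x)
      = log (∑ w, h w * exp (g w)) - ∑ x, p x * g x := by
  set Z := ∑ w, h w * exp (g w)
  have hterm : ∀ x, p x * log (p x / (h x * exp (g x) / Z)) - p x * log (p x / h x)
      = p x * log Z - p x * g x := by
    intro x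
    rcases eq_or_ne (p x) 0 with hpx | hpx
    · simp [hpx]
    have hx : 0 < h x * exp (g x) := mul_pos (hh x) (exp_pos _)
    have hZ : 0 < Z := hx.trans_le <|
      single_le_sum (fun w _ => (mul_pos (hh w) (exp_pos _)).le) (mem_univ x)
    rw [log_div hpx (div_pos hx hZ).ne', log_div hpx (hh x).ne', log_div hx.ne' hZ.ne',
      log_mul (hh x).ne' (exp_pos _).ne', log_exp]
    ring
  rw [← sum_sub_distrib, sum_congr rfl fun x _ => hterm x, sum_sub_distrib, ← sum_mul, hpsum,
    one_mul]

theorem stmt_4_general {𝒳 : Type*} [Fintype 𝒳]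
    (p h : 𝒳 → ℝ) (hpsum : ∑ x, p x = 1)
    (hh : ∀ x, 0 < h x) (hhsum : ∑ x, h x = 1)
    (q : 𝒳 → ℝ) (hq : ∀ x, q x ∈ Set.Icc (0:ℝ) 1)
    (η : ℝ) (hη : η ∈ Set.Ioo (0:ℝ) 1) (s : ℝ) (hs : s = -1 ∨ s = 1)
    (h' : 𝒳 → ℝ)
    (hupd : ∀ x, h' x = h x * Real.exp (s * η * q x) / ∑ w, h w * Real.exp (s * η * q w)) :
    (∑ x, p x * Real.log (p x / h' x)) - (∑ x, p x * Real.log (p x / h x)) ≤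
      -(s * η * ((∑ x, q x * p x) - (∑ x, q x * h x))) + η^2 / 2 := by
  have hmgf : log (∑ w, h w * exp (s * η * q w)) ≤ ∑ x, h x * (s * η * q x) + η ^ 2 / 2 := by
    obtain ⟨a, b, hab, hrange⟩ : ∃ a b : ℝ, (b - a) ^ 2 = η ^ 2 ∧ ∀ x, s * η * q x ∈ Set.Icc a b := by
      rcases hs with rfl | rfl
      · refine ⟨-η, 0, by ring, fun x => ?_⟩
        obtain ⟨hq0, hq1⟩ := hq x
        constructor <;> nlinarith [hη.1]
      · refine ⟨0, η, by ring, fun x => ?_⟩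
        obtain ⟨hq0, hq1⟩ := hq x
        constructor <;> nlinarith [hη.1]
    simpa only [hab] using log_sum_mul_exp_le (fun x => (hh x).le) hhsum hrange
  have hweight : ∀ f : 𝒳 → ℝ, ∑ x, f x * (s * η * q x) = s * η * ∑ x, q x * f x := fun f => by
    rw [mul_sum]; exact sum_congr rfl fun x _ => by ring
  simp only [hupd, sum_mul_log_div_exp_update_sub p h _ hpsum hh]
  rw [hweight] at hmgf ⊢
  linarith

theorem stmt_4 {𝒳 : Type*} [Fintype 𝒳] [Nonempty 𝒳]
    (p h : 𝒳 → ℝ) (hp : ∀ x, 0 ≤ p x) (hpsum : ∑ x, p x = 1)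
    (hh : ∀ x, 0 < h x) (hhsum : ∑ x, h x = 1)
    (q : 𝒳 → ℝ) (hq : ∀ x, q x ∈ Set.Icc (0:ℝ) 1)
    (η : ℝ) (hη : η ∈ Set.Ioo (0:ℝ) 1) (s : ℝ) (hs : s = -1 ∨ s = 1)
    (h' : 𝒳 → ℝ)
    (hupd : ∀ x, h' x = h x * Real.exp (s * η * q x) / ∑ w, h w * Real.exp (s * η * q w)) :
    (∑ x, p x * Real.log (p x / h' x)) - (∑ x, p x * Real.log (p x / h x)) ≤
      -(s * η * ((∑ x, q x * p x) - (∑ x, q x * h x))) + η^2 / 2 :=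
  stmt_4_general p h hpsum hh hhsum q hq η hη s hs h' hupd
end

section
/- For the Laplace mechanism with scale 1/ε (sensitivity-1 query), its Rényi divergence of order a > 1 between outputs on adjacent inputs is (1/(a-1))·ln( (a/(2a-1))·exp(ε(a-1)) + ((a-1)/(2a-1))·exp(-εa) ), and as a → ∞ this converges to ε (recovering pure ε-DP). -/
/-!
Both Laplace log-densities are piecewise linear with kinks at `0` and `1`, so `p ^ a * q ^ (1 - a)`
is the exponential of a function that is affine on `(-∞, 0]`, `[0, 1]` and `[1, ∞)`, and the
integral is a sum of three elementary exponential integrals. For the limit, the closed form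
`M a` satisfies `exp (ε (a - 1)) / 2 ≤ M a ≤ exp (ε (a - 1))`, which squeezes `log (M a) / (a - 1)`
between `ε - log 2 / (a - 1)` and `ε`.
-/

open Real MeasureTheory Filter Set Topology

section PiecewiseExp

variable {k : ℝ}

theorem integrableOn_exp_mul_add_Iic (hk : 0 < k) (c m : ℝ) :
    IntegrableOn (fun x => exp (k * x + m)) (Iic c) := by
  simp_rw [exp_add]
  exact (integrableOn_exp_mul_Iic hk c).mul_const _

theorem integrableOn_exp_mul_add_Ioi (hk : k < 0) (c m : ℝ) :
    IntegrableOn (fun x => exp (k * x + m)) (Ioi c) := by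
  simp_rw [exp_add]
  exact (integrableOn_exp_mul_Ioi hk c).mul_const _

theorem integral_exp_mul_add_Iic (hk : 0 < k) (c m : ℝ) :
    ∫ x in Iic c, exp (k * x + m) = exp (k * c + m) / k := by
  simp_rw [exp_add, integral_mul_const, integral_exp_mul_Iic hk]
  ring

theorem integral_exp_mul_add_Ioi (hk : k < 0) (c m : ℝ) :
    ∫ x in Ioi c, exp (k * x + m) = -exp (k * c + m) / k := by
  simp_rw [exp_add, integral_mul_const, integral_exp_mul_Ioi hk]
  ring

theorem intervalIntegral_exp_mul_add (hk : k ≠ 0) (a b m : ℝ) :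
    ∫ x in a..b, exp (k * x + m) = (exp (k * b + m) - exp (k * a + m)) / k := by
  rw [intervalIntegral.integral_comp_mul_add exp hk, integral_exp, smul_eq_mul]
  ring

theorem integral_eq_of_eqOn_exp_Iic_Icc_Ioi {g : ℝ → ℝ} {a b k₁ k₂ k₃ m₁ m₂ m₃ : ℝ}
    (hab : a ≤ b) (hk₁ : 0 < k₁) (hk₂ : k₂ ≠ 0) (hk₃ : k₃ < 0)
    (h₁ : EqOn g (fun x => exp (k₁ * x + m₁)) (Iic a))
    (h₂ : EqOn g (fun x => exp (k₂ * x + m₂)) (Icc a b))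
    (h₃ : EqOn g (fun x => exp (k₃ * x + m₃)) (Ioi b)) :
    ∫ x, g x = exp (k₁ * a + m₁) / k₁ + (exp (k₂ * b + m₂) - exp (k₂ * a + m₂)) / k₂
      - exp (k₃ * b + m₃) / k₃ := by
  have hIic : IntegrableOn g (Iic a) :=
    (integrableOn_exp_mul_add_Iic hk₁ a m₁).congr_fun h₁.symm measurableSet_Iic
  have hIcc : IntegrableOn g (Icc a b) :=
    (by fun_prop : Continuous fun x => exp (k₂ * x + m₂)).integrableOn_Icc.congr_fun h₂.symm
      measurableSet_Icc
  have hIoi : IntegrableOn g (Ioi b) :=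
    (integrableOn_exp_mul_add_Ioi hk₃ b m₃).congr_fun h₃.symm measurableSet_Ioi
  have hIoi' : IntegrableOn g (Ioi a) := by
    rw [← Ioc_union_Ioi_eq_Ioi hab]
    exact (hIcc.mono_set Ioc_subset_Icc_self).union hIoi
  rw [← intervalIntegral.integral_Iic_add_Ioi hIic hIoi',
    ← intervalIntegral.integral_interval_add_Ioi hIoi' hIoi,
    setIntegral_congr_fun measurableSet_Iic h₁, setIntegral_congr_fun measurableSet_Ioi h₃,
    intervalIntegral.integral_congr (h₂.mono (uIcc_of_le hab).subset),
    integral_exp_mul_add_Iic hk₁, intervalIntegral_exp_mul_add hk₂,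
    integral_exp_mul_add_Ioi hk₃]
  ring

end PiecewiseExp

theorem div_rpow_mul_eq_exp {c : ℝ} (hc : c ≠ 0) (u v a : ℝ) :
    (c * exp u / (c * exp v)) ^ a * (c * exp v) = c * exp (a * u + (1 - a) * v) := by
  rw [mul_div_mul_left _ _ hc, ← exp_sub, ← exp_mul, mul_left_comm, ← exp_add]
  congr 2
  ring

theorem integral_laplace_div_rpow_mul {ε a : ℝ} (hε : 0 < ε) (ha : 2 * a - 1 ≠ 0) :
    (∫ x : ℝ, ((ε / 2 * exp (-ε * |x|)) / (ε / 2 * exp (-ε * |x - 1|))) ^ a *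
        (ε / 2 * exp (-ε * |x - 1|))) =
      a / (2 * a - 1) * exp (ε * (a - 1)) + (a - 1) / (2 * a - 1) * exp (-ε * a) := by
  simp_rw [div_rpow_mul_eq_exp (by positivity : ε / 2 ≠ 0), integral_const_mul]
  have hk₂ : -(ε * (2 * a - 1)) ≠ 0 := neg_ne_zero.mpr (mul_ne_zero hε.ne' ha)
  rw [integral_eq_of_eqOn_exp_Iic_Icc_Ioi zero_le_one hε hk₂ (neg_lt_zero.mpr hε)
    (m₁ := ε * (a - 1)) (m₂ := ε * (a - 1)) (m₃ := -(ε * (a - 1)))]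
  · have h₂ : -(ε * (2 * a - 1)) * 1 + ε * (a - 1) = -ε * a := by ring
    have h₃ : -ε * 1 + -(ε * (a - 1)) = -ε * a := by ring
    rw [h₂, h₃, mul_zero, zero_add, mul_zero, zero_add]
    field_simp
    ring
  · intro x (hx : x ≤ 0)
    dsimp only
    rw [abs_of_nonpos hx, abs_of_nonpos (by linarith)]
    congr 1
    ring
  · intro x ⟨hx₀, hx₁⟩
    dsimp only
    rw [abs_of_nonneg hx₀, abs_of_nonpos (by linarith)]
    congr 1
    ring
  · intro x (hx : 1 < x)
    dsimp only
    rw [abs_of_pos (by linarith : (0:ℝ) < x), abs_of_pos (by linarith : (0:ℝ) < x - 1)]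
    congr 1
    ring

theorem tendsto_inv_sub_one_mul_log_of_exp_bounds {f : ℝ → ℝ} {ε c : ℝ} (hc : 0 < c)
    (hf : ∀ᶠ a in atTop, c * exp (ε * (a - 1)) ≤ f a ∧ f a ≤ exp (ε * (a - 1))) :
    Tendsto (fun a => 1 / (a - 1) * log (f a)) atTop (𝓝 ε) := by
  have hden : Tendsto (fun a : ℝ => a - 1) atTop atTop :=
    tendsto_atTop_add_const_right _ _ tendsto_id
  have hlower : Tendsto (fun a : ℝ => ε + log c / (a - 1)) atTop (𝓝 ε) := by
    simpa using ((tendsto_const_nhds (x := log c)).div_atTop hden).const_add ε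
  refine tendsto_of_tendsto_of_tendsto_of_le_of_le' hlower tendsto_const_nhds ?_ ?_
  · filter_upwards [hf, eventually_gt_atTop 1] with a ⟨hlo, _⟩ ha
    have hlog : log c + ε * (a - 1) ≤ log (f a) := by
      rw [← log_exp (ε * (a - 1)), ← log_mul hc.ne' (exp_pos _).ne']
      exact log_le_log (by positivity) hlo
    have hpos : 0 < a - 1 := sub_pos.mpr ha
    calc ε + log c / (a - 1) = (log c + ε * (a - 1)) / (a - 1) := by field_simp; ring
      _ ≤ log (f a) / (a - 1) := by gcongr
      _ = 1 / (a - 1) * log (f a) := (one_div_mul_eq_div _ _).symm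
  · filter_upwards [hf, eventually_gt_atTop 1] with a ⟨hlo, hhi⟩ ha
    have hlog : log (f a) ≤ ε * (a - 1) :=
      log_exp (ε * (a - 1)) ▸ log_le_log (lt_of_lt_of_le (by positivity) hlo) hhi
    rwa [one_div_mul_eq_div, div_le_iff₀ (sub_pos.mpr ha)]

theorem laplace_renyi_moment_bounds {ε a : ℝ} (hε : 0 ≤ ε) (ha : 1 < a) :
    1 / 2 * exp (ε * (a - 1)) ≤
        a / (2 * a - 1) * exp (ε * (a - 1)) + (a - 1) / (2 * a - 1) * exp (-ε * a) ∧
      a / (2 * a - 1) * exp (ε * (a - 1)) + (a - 1) / (2 * a - 1) * exp (-ε * a) ≤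
        exp (ε * (a - 1)) := by
  have h2a : 0 < 2 * a - 1 := by linarith
  have hw : 1 / 2 ≤ a / (2 * a - 1) := by rw [div_le_div_iff₀ two_pos h2a]; linarith
  have hv : 0 ≤ (a - 1) / (2 * a - 1) := div_nonneg (by linarith) h2a.le
  have hexp : exp (-ε * a) ≤ exp (ε * (a - 1)) := exp_le_exp.mpr (by nlinarith)
  constructor
  · nlinarith [exp_pos (ε * (a - 1)), exp_pos (-ε * a)]
  · calc _ ≤ a / (2 * a - 1) * exp (ε * (a - 1)) +
            (a - 1) / (2 * a - 1) * exp (ε * (a - 1)) := by gcongr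
      _ = exp (ε * (a - 1)) := by
          rw [← add_mul, ← add_div, show a + (a - 1) = 2 * a - 1 by ring,
            div_self h2a.ne', one_mul]

theorem stmt_18 (ε : ℝ) (hε : 0 < ε) :
    (∀ a : ℝ, 1 < a →
      (∫ x : ℝ, ((ε / 2 * Real.exp (-ε * |x|)) / (ε / 2 * Real.exp (-ε * |x - 1|)))^a *
          (ε / 2 * Real.exp (-ε * |x - 1|))) =
        a / (2 * a - 1) * Real.exp (ε * (a - 1)) +
          (a - 1) / (2 * a - 1) * Real.exp (-ε * a)) ∧
    Filter.Tendsto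
      (fun a : ℝ => (1 / (a - 1)) *
        Real.log (a / (2 * a - 1) * Real.exp (ε * (a - 1)) +
          (a - 1) / (2 * a - 1) * Real.exp (-ε * a)))
      Filter.atTop (nhds ε) :=
  ⟨fun _ ha => integral_laplace_div_rpow_mul hε (by linarith),
    tendsto_inv_sub_one_mul_log_of_exp_bounds one_half_pos <|
      (eventually_gt_atTop 1).mono fun _ ha => laplace_renyi_moment_bounds hε.le ha⟩
end
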